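/- arXiv:2410.11336 — 3 statements merged into one kernel-verified Lean document; each statement's English description precedes it below -/
import Mathlib

section
/- Let (S_i)_{i≥1} be a sequence in a commutative ℚ-algebra and define (a_n)_{n≥0} by a_0 = 1 and the recurrence n·a_n = Σ_{i=1}^{n} S_i · a_{n-i} for n ≥ 1. Then for every n ≥ 1, a_n = Σ over all compositions (m_1,…,m_r) of n of Π_{s=1}^{r} S_{m_s}/(m_1+⋯+m_s). -/
/-!
Both sides satisfy the same recurrence, and the recurrence determines the sequence because every
positive integer is invertible in a `ℚ`-algebra. For the composition sum, split off the last block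
`m_r = i`: the remaining blocks form a composition of `n - i` with the same partial sums, and the
new last partial sum is `n`, so multiplying by `n` cancels the new factor `S_i / n`.
-/

open Finset

namespace Composition

variable {n : ℕ}

theorem heq_of_blocks_eq {m : ℕ} {c : Composition m} {d : Composition n}
    (h : c.blocks = d.blocks) : c ≍ d := by
  obtain rfl : m = n := c.blocks_sum.symm.trans (h ▸ d.blocks_sum)
  exact heq_of_eq (Composition.ext h)

/-- `getLastD 0` keeps this total: the empty composition of `0` is sent to itself. -/
def dropLast (c : Composition n) : Composition (n - c.blocks.getLastD 0) where
  blocks := c.blocks.dropLast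
  blocks_pos h := c.blocks_pos (List.mem_of_mem_dropLast h)
  blocks_sum := by
    have hsum := c.blocks_sum
    rcases c.blocks.eq_nil_or_concat with h | ⟨L, b, h⟩ <;> simp [h] at hsum ⊢ <;> omega

theorem sum_eq_sum_sum_blocks_append_singleton {M : Type*} [AddCommMonoid M] (hn : 0 < n)
    (f : List ℕ → M) :
    ∑ c : Composition n, f c.blocks =
      ∑ i ∈ Icc 1 n, ∑ c : Composition (n - i), f (c.blocks ++ [i]) := by
  have hne (c : Composition n) : c.blocks ≠ [] := by simpa [blocks_eq_nil] using hn.ne'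
  rw [sum_sigma']
  symm
  refine sum_bij' (fun p hp => (p.2.append (single p.1 (mem_Icc.1 (mem_sigma.1 hp).1).1)).cast
      (Nat.sub_add_cancel (mem_Icc.1 (mem_sigma.1 hp).1).2))
    (fun c _ => ⟨c.blocks.getLastD 0, c.dropLast⟩) (fun _ _ => mem_univ _) ?_ ?_ ?_ ?_
  · intro c _
    simp only [mem_sigma, mem_Icc, mem_univ, and_true]
    rw [List.getLastD_eq_getLast?, List.getLast?_eq_some_getLast (hne c), Option.getD_some]
    exact ⟨c.one_le_blocks (List.getLast_mem (hne c)), c.blocks_le (List.getLast_mem (hne c))⟩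
  · rintro ⟨i, c⟩ _
    exact Sigma.ext (by simp) (heq_of_blocks_eq (by simp [dropLast]))
  · intro c _
    ext1
    obtain ⟨L, b, h⟩ := c.blocks.eq_nil_or_concat.resolve_left (hne c)
    simp [h, dropLast]
  · rintro ⟨i, c⟩ _
    simp

end Composition

section

variable {A : Type*} [CommSemiring A] [Algebra ℚ A] (S : ℕ → A)

/-- For `l = [m₁, …, m_r]` this is `∏ₛ S_{mₛ} / (m₁ + ⋯ + mₛ)`. -/
noncomputable def blocksWeight (l : List ℕ) : A :=
  ∏ s ∈ range l.length, (((l.take (s + 1)).sum : ℚ)⁻¹) • S (l.getD s 0)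

theorem blocksWeight_concat (l : List ℕ) (i : ℕ) :
    blocksWeight S (l ++ [i]) = blocksWeight S l * (((l.sum + i : ℕ) : ℚ)⁻¹ • S i) := by
  rw [blocksWeight, List.length_append, List.length_singleton, prod_range_succ]
  congr 1
  · refine prod_congr rfl fun s hs => ?_
    have hs : s < l.length := mem_range.1 hs
    rw [List.take_append_of_le_length hs, List.getD_append _ _ _ _ hs]
  · simp

theorem Composition.prod_sizeUpTo_inv_smul_eq_blocksWeight {n : ℕ} (c : Composition n) :
    ∏ s : Fin c.length, ((c.sizeUpTo (s + 1) : ℚ)⁻¹) • S (c.blocksFun s) =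
      blocksWeight S c.blocks := by
  rw [blocksWeight, prod_range]
  refine Fintype.prod_congr _ _ fun s => ?_
  simp [Composition.sizeUpTo, Composition.blocksFun]

theorem sum_blocksWeight_composition_zero :
    ∑ c : Composition 0, blocksWeight S c.blocks = 1 := by
  have hnil (c : Composition 0) : c.blocks = [] := c.blocks_eq_nil.2 rfl
  simp [blocksWeight, hnil, composition_card]

theorem natCast_mul_sum_blocksWeight {n : ℕ} (hn : 0 < n) :
    (n : A) * ∑ c : Composition n, blocksWeight S c.blocks =
      ∑ i ∈ Icc 1 n, S i * ∑ c : Composition (n - i), blocksWeight S c.blocks := by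
  rw [Composition.sum_eq_sum_sum_blocks_append_singleton hn, mul_sum]
  refine sum_congr rfl fun i hi => ?_
  have hin : n - i + i = n := Nat.sub_add_cancel (mem_Icc.1 hi).2
  have hn' : (n : ℚ) ≠ 0 := Nat.cast_ne_zero.2 hn.ne'
  simp only [blocksWeight_concat, Composition.blocks_sum, hin, mul_sum]
  refine sum_congr rfl fun c _ => ?_
  rw [← map_natCast (algebraMap ℚ A), ← Algebra.smul_def, mul_smul_comm, smul_smul,
    mul_inv_cancel₀ hn', one_smul, mul_comm]

theorem eq_of_natCast_mul_eq_sum {a b : ℕ → A} (h0 : a 0 = b 0)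
    (ha : ∀ n : ℕ, 1 ≤ n → (n : A) * a n = ∑ i ∈ Icc 1 n, S i * a (n - i))
    (hb : ∀ n : ℕ, 1 ≤ n → (n : A) * b n = ∑ i ∈ Icc 1 n, S i * b (n - i)) : a = b := by
  funext n
  induction n using Nat.strong_induction_on with
  | _ n ih =>
    rcases Nat.eq_zero_or_pos n with rfl | hn
    · exact h0
    · have hunit : IsUnit (n : A) := by
        rw [← map_natCast (algebraMap ℚ A)]
        exact (isUnit_iff_ne_zero.2 (Nat.cast_ne_zero.2 hn.ne')).map _
      refine hunit.mul_left_cancel ?_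
      rw [ha n hn, hb n hn]
      exact sum_congr rfl fun i hi => by rw [ih (n - i) (by grind)]

end

/-- If `a 0 = 1` and `n • a n = ∑_{i=1}^n S i * a (n-i)`, then `a n` is the sum over
compositions of `n` of the products `∏ S_{m_s} / (m_1 + ⋯ + m_s)`. -/
theorem coeff_eq_sum_over_compositions {A : Type*} [CommRing A] [Algebra ℚ A]
    (S : ℕ → A) (a : ℕ → A)
    (ha0 : a 0 = 1)
    (harec : ∀ n : ℕ, 1 ≤ n → (n : A) * a n = ∑ i ∈ Finset.Icc 1 n, S i * a (n - i)) :
    ∀ n : ℕ, 1 ≤ n →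
      a n = ∑ c : Composition n, ∏ s : Fin c.length,
        ((c.sizeUpTo (s + 1) : ℚ)⁻¹) • S (c.blocksFun s) := by
  intro n _
  have ha : a = fun n ↦ ∑ c : Composition n, blocksWeight S c.blocks :=
    eq_of_natCast_mul_eq_sum S (ha0.trans (sum_blocksWeight_composition_zero S).symm) harec
      fun _ hn ↦ natCast_mul_sum_blocksWeight S hn
  simp only [ha, Composition.prod_sizeUpTo_inv_smul_eq_blocksWeight]
end

section
/- Define a_{n,π/4} = Σ over compositions (m_1,…,m_r) of n of (−1)^r 2^r 2^{n/2} Π_{s=1}^{r} C_{π/4}(m_s)/(m_1+⋯+m_s) and a_{n,3π/4} analogously with C_{3π/4}, where C_θ(m) = (g−1)cos(mθ) + cos(mπ/2) for a fixed real g. Then a_{n,π/4} = a_{n,3π/4} if n is even and a_{n,π/4} = −a_{n,3π/4} if n is odd. -/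
open Real

/-- `a_{n,θ}`: the sum over compositions of `n` of
`(-1)^r 2^r 2^{n/2} ∏_s C_θ(m_s)/(m_1+⋯+m_s)` where `C_θ(m) = (g-1)cos(mθ) + cos(mπ/2)`. -/
noncomputable def aTheta (g θ : ℝ) (n : ℕ) : ℝ :=
  ∑ c : Composition n, (-1 : ℝ) ^ c.length * 2 ^ c.length * Real.sqrt 2 ^ n *
    ∏ s : Fin c.length,
      ((g - 1) * Real.cos ((c.blocksFun s : ℝ) * θ)
        + Real.cos ((c.blocksFun s : ℝ) * (π / 2))) / (c.sizeUpTo (s + 1) : ℝ)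

lemma cos_three_pi_div_four (m : ℕ) :
    Real.cos ((m : ℝ) * (3 * π / 4)) = (-1 : ℝ) ^ m * Real.cos ((m : ℝ) * (π / 4)) := by
  have h : (m : ℝ) * (3 * π / 4) = (m : ℝ) * π - (m : ℝ) * (π / 4) := by ring
  rw [h, Real.cos_nat_mul_pi_sub]

lemma neg_pow_mul_cos_half (m : ℕ) :
    (-1 : ℝ) ^ m * Real.cos ((m : ℝ) * (π / 2)) = Real.cos ((m : ℝ) * (π / 2)) := by
  rcases Nat.even_or_odd m with he | ho
  · rw [he.neg_one_pow, one_mul]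
  · obtain ⟨k, hk⟩ := ho
    have h : (m : ℝ) * (π / 2) = (k : ℝ) * π + π / 2 := by
      subst hk; push_cast; ring
    rw [h, Real.cos_add_pi_div_two, Real.sin_nat_mul_pi, neg_zero, mul_zero]

lemma aTheta_key (g : ℝ) (n : ℕ) :
    aTheta g (3 * π / 4) n = (-1 : ℝ) ^ n * aTheta g (π / 4) n := by
  unfold aTheta
  rw [Finset.mul_sum]
  refine Finset.sum_congr rfl fun c _ => ?_
  have hterm : ∀ s : Fin c.length,
      ((g - 1) * Real.cos ((c.blocksFun s : ℝ) * (3 * π / 4))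
        + Real.cos ((c.blocksFun s : ℝ) * (π / 2))) / (c.sizeUpTo (s + 1) : ℝ)
      = (-1 : ℝ) ^ (c.blocksFun s) *
        (((g - 1) * Real.cos ((c.blocksFun s : ℝ) * (π / 4))
          + Real.cos ((c.blocksFun s : ℝ) * (π / 2))) / (c.sizeUpTo (s + 1) : ℝ)) := by
    intro s
    rw [cos_three_pi_div_four]
    conv_lhs => rw [← neg_pow_mul_cos_half (c.blocksFun s)]
    ring
  rw [Finset.prod_congr rfl (fun s _ => hterm s), Finset.prod_mul_distrib,
    Finset.prod_pow_eq_pow_sum, c.sum_blocksFun]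
  ring

/-- `a_{n,π/4} = a_{n,3π/4}` if `n` is even and `a_{n,π/4} = -a_{n,3π/4}` if `n` is odd. -/
theorem aTheta_symmetry (g : ℝ) (n : ℕ) (hn : 0 < n) :
    (Even n → aTheta g (π / 4) n = aTheta g (3 * π / 4) n)
    ∧ (Odd n → aTheta g (π / 4) n = -aTheta g (3 * π / 4) n) := by
  have h := aTheta_key g n
  constructor
  · intro he
    rw [h, he.neg_one_pow, one_mul]
  · intro ho
    rw [h, ho.neg_one_pow]
    ring
end

section
/- Let (S_i)_{i≥1} be rationals with S_i ≠ 0 for all i, and define a_n by a_0 = 1 and n·a_n = Σ_{i=1}^{n} S_i a_{n−i}. Let B_n be the triangular matrix with entries b_{i,j} = S_{i+1−j}/S_{i−j} for j < i and b_{i,i} = S_1/i. Then a_n = pper(B_n) for all n ≥ 0, where pper is defined by pper(B_0) = 1 and pper(B_n) = Σ_{s=1}^{n} {b_{n,s}}·pper(B_{s−1}) with {b_{n,s}} = Π_{k=s}^{n} b_{n,k}. -/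
/-!
Both sequences satisfy `n x_n = ∑_{i=1}^n S_i x_{n-i}` with `x_0 = 1`, which determines them.
For `a` this is the definition. For `pper`, the off-diagonal part of the product
`{b_{n,s}} = ∏_{k=s}^n b_{n,k}` telescopes to `S_{n+1-s}/S_1`, so `{b_{n,s}} = S_{n+1-s}/n`, and
the last-row expansion becomes that recursion after reindexing `i = n + 1 - s`.
-/

open Finset

theorem Finset.prod_Ico_div_of_ne_zero {K : Type*} [Field K] {f : ℕ → K} {m n : ℕ}
    (hmn : m ≤ n) (hf : ∀ i ∈ Icc m n, f i ≠ 0) :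
    ∏ i ∈ Ico m n, f (i + 1) / f i = f n / f m := by
  induction n, hmn using Nat.le_induction with
  | base => rw [Ico_self, prod_empty, div_self (hf m (by simp))]
  | succ n hmn ih =>
    have hfn : f n ≠ 0 := hf n (by simp [hmn])
    rw [prod_Ico_succ_top hmn, ih fun i hi => hf i (Icc_subset_Icc_right n.le_succ hi),
      mul_comm, div_mul_div_cancel₀ hfn]

theorem Finset.sum_Icc_one_reflect {M : Type*} [AddCommMonoid M] (f : ℕ → M) (n : ℕ) :
    ∑ s ∈ Icc 1 n, f (n + 1 - s) = ∑ i ∈ Icc 1 n, f i := by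
  rw [← Ico_add_one_right_eq_Icc, sum_Ico_reflect f 1 (Nat.le_succ (n + 1))]
  congr 2
  omega

theorem prod_Ico_ratio_telescope {K : Type*} [Field K] {S : ℕ → K}
    (hS : ∀ i : ℕ, 1 ≤ i → S i ≠ 0) {n s : ℕ} (hsn : s ≤ n) :
    ∏ k ∈ Ico s n, S (n + 1 - k) / S (n - k) = S (n + 1 - s) / S 1 := by
  have hreflect := prod_Ico_reflect (fun j => S (j + 1) / S j) s (Nat.le_succ n)
  rw [Nat.add_sub_cancel_left, prod_Ico_div_of_ne_zero (by omega)
    fun i hi => hS i (mem_Icc.1 hi).1] at hreflect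
  rw [← hreflect]
  refine prod_congr rfl fun k hk => ?_
  rw [Nat.sub_add_comm (mem_Ico.1 hk).2.le]

theorem prod_Icc_row_eq {K : Type*} [Field K] {S : ℕ → K} (hS : ∀ i : ℕ, 1 ≤ i → S i ≠ 0)
    {n : ℕ} {row : ℕ → K} (hrow : ∀ j : ℕ, 1 ≤ j → j < n → row j = S (n + 1 - j) / S (n - j))
    (hdiag : row n = S 1 / n) {s : ℕ} (hs : 1 ≤ s) (hsn : s ≤ n) :
    ∏ k ∈ Icc s n, row k = S (n + 1 - s) / n := by
  rw [← Ico_add_one_right_eq_Icc, prod_Ico_succ_top hsn, hdiag,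
    prod_congr rfl fun k hk => hrow k (hs.trans (mem_Ico.1 hk).1) (mem_Ico.1 hk).2,
    prod_Ico_ratio_telescope hS hsn, div_mul_div_cancel₀ (hS 1 le_rfl)]

theorem eq_of_mul_eq_sum_Icc {K : Type*} [Ring K] [NoZeroDivisors K] [CharZero K]
    (S : ℕ → K) {x y : ℕ → K} (h0 : x 0 = y 0)
    (hx : ∀ n : ℕ, 1 ≤ n → (n : K) * x n = ∑ i ∈ Icc 1 n, S i * x (n - i))
    (hy : ∀ n : ℕ, 1 ≤ n → (n : K) * y n = ∑ i ∈ Icc 1 n, S i * y (n - i)) :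
    ∀ n : ℕ, x n = y n := by
  intro n
  induction n using Nat.strong_induction_on with
  | _ n ih =>
    rcases Nat.eq_zero_or_pos n with rfl | hn
    · exact h0
    refine mul_left_cancel₀ (Nat.cast_ne_zero.2 hn.ne') ?_
    rw [hx n hn, hy n hn]
    exact sum_congr rfl fun i hi => by rw [ih (n - i) (by have := (mem_Icc.1 hi).1; omega)]

/-- The coefficients `a_n` defined by `a_0 = 1` and `n a_n = ∑_{i=1}^n S_i a_{n-i}` coincide
with the parapermanents `pper(B_n)` of the triangular matrices with entries
`b_{i,j} = S_{i+1-j}/S_{i-j}` for `j < i` and `b_{i,i} = S_1/i`, where `pper` satisfies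
`pper(B_0) = 1` and the last-row expansion. -/
theorem coeff_eq_pper (S : ℕ → ℚ) (hS : ∀ i : ℕ, 1 ≤ i → S i ≠ 0) (a : ℕ → ℚ)
    (ha0 : a 0 = 1)
    (harec : ∀ n : ℕ, 1 ≤ n → (n : ℚ) * a n = ∑ i ∈ Finset.Icc 1 n, S i * a (n - i))
    (b : ℕ → ℕ → ℚ)
    (hb : ∀ i j : ℕ, 1 ≤ j → j < i → b i j = S (i + 1 - j) / S (i - j))
    (hbd : ∀ i : ℕ, 1 ≤ i → b i i = S 1 / (i : ℚ))
    (p : ℕ → ℚ) (hp0 : p 0 = 1)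
    (hprec : ∀ n : ℕ, 1 ≤ n →
      p n = ∑ s ∈ Finset.Icc 1 n, (∏ k ∈ Finset.Icc s n, b n k) * p (s - 1)) :
    ∀ n : ℕ, a n = p n := by
  have hp_mul_eq_sum : ∀ n : ℕ, 1 ≤ n → (n : ℚ) * p n = ∑ i ∈ Icc 1 n, S i * p (n - i) := by
    intro n hn
    rw [hprec n hn, mul_sum, ← sum_Icc_one_reflect fun i => S i * p (n - i)]
    refine sum_congr rfl fun s hs => ?_
    obtain ⟨hs1, hsn⟩ := mem_Icc.1 hs
    rw [prod_Icc_row_eq hS (hb n) (hbd n hn) hs1 hsn,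
      show n - (n + 1 - s) = s - 1 by omega]
    field_simp
  exact eq_of_mul_eq_sum_Icc S (ha0.trans hp0.symm) harec hp_mul_eq_sum
end
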